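/- arXiv:0803.2374 — 4 statements merged into one kernel-verified Lean document; each statement's English description precedes it below -/
import Mathlib

section
/- The topological closure of G_∞ in T ∗ R(Ω) equals {(α,t,β) ∈ T ∗ R(Ω) : t ∈ ⋂_{N∈ℕ} closure(W_{α|N} ∩ W_{β|N})}. -/
open TopologicalSpace

variable {T : Type*} [TopologicalSpace T]

/-- `W_{α|n} = ⋂_{k=0}^n V^{(k)}_{α_k}`, the intersection determined by the
first `n+1` entries of the sequence `α`. -/
def Wset (V : ℕ → ℕ → Set T) (α : ℕ → ℕ) (n : ℕ) : Set T :=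
  ⋂ k ≤ n, V k (α k)

/-- `α` is a valid index sequence: `α k` indexes a member of the cover `V^{(k)}`. -/
def Bnd (nk : ℕ → ℕ) (α : ℕ → ℕ) : Prop := ∀ k, α k ≤ nk k

/-- Tail equivalence of index sequences. -/
def TailEq (α β : ℕ → ℕ) : Prop := {k : ℕ | α k ≠ β k}.Finite

/-- Membership `(α,t,β) ∈ Ǧ_∞`: `α ∼ β` and
`t ∈ ⋂_N closure W_{α|N} ∩ ⋂_N closure W_{β|N}`. -/
def InGck (nk : ℕ → ℕ) (V : ℕ → ℕ → Set T) (α : ℕ → ℕ) (t : T) (β : ℕ → ℕ) : Prop :=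
  Bnd nk α ∧ Bnd nk β ∧ TailEq α β ∧
    (∀ N, t ∈ closure (Wset V α N)) ∧ (∀ N, t ∈ closure (Wset V β N))

/-- Pairs of tail-equivalent valid index sequences: the underlying set of the
Glimm groupoid `R(Ω)` for the admissible set `Ω` determined by `nk`. -/
def ROm (nk : ℕ → ℕ) : Type :=
  {p : (ℕ → ℕ) × (ℕ → ℕ) // Bnd nk p.1 ∧ Bnd nk p.2 ∧ TailEq p.1 p.2}

/-- Basic set `O_{(α,β)}(N)` of the Glimm groupoid topology. -/
def OB (nk : ℕ → ℕ) (p : ROm nk) (N : ℕ) : Set (ROm nk) :=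
  {q | (∀ k ≤ N, q.1.1 k = p.1.1 k ∧ q.1.2 k = p.1.2 k) ∧
    ∀ k, N < k → q.1.1 k = q.1.2 k}

/-- The collection of basic sets. -/
def BS (nk : ℕ → ℕ) : Set (Set (ROm nk)) :=
  {s | ∃ (p : ROm nk) (N : ℕ),
    (∀ k, N < k → p.1.1 k = p.1.2 k) ∧ s = OB nk p N}

/-- The Glimm groupoid topology on `R(Ω)`. -/
instance ROmTop (nk : ℕ → ℕ) : TopologicalSpace (ROm nk) :=
  TopologicalSpace.generateFrom (BS nk)

/-- `T ∗ R(Ω)`: an element `(⟨(α,β),_⟩, t)` encodes the triple `(α,t,β)`;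
it carries the product topology. -/
abbrev TROm (nk : ℕ → ℕ) (T : Type*) [TopologicalSpace T] : Type _ := ROm nk × T

/-- `Ǧ_∞` as a subset of `T ∗ R(Ω)`. -/
def GckSet (nk : ℕ → ℕ) (V : ℕ → ℕ → Set T) : Set (TROm nk T) :=
  {x | (∀ N, x.2 ∈ closure (Wset V x.1.1.1 N)) ∧
       (∀ N, x.2 ∈ closure (Wset V x.1.1.2 N))}

/-- `G_∞` as a subset of `T ∗ R(Ω)`. -/
def GinfSet (nk : ℕ → ℕ) (V : ℕ → ℕ → Set T) : Set (TROm nk T) :=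
  {x | ∀ N, x.2 ∈ Wset V x.1.1.1 N ∧ x.2 ∈ Wset V x.1.1.2 N}

lemma mem_Wset {V : ℕ → ℕ → Set T} {α : ℕ → ℕ} {n : ℕ} {t : T} :
    t ∈ Wset V α n ↔ ∀ k ≤ n, t ∈ V k (α k) := by
  simp [Wset]

lemma Wset_congr {V : ℕ → ℕ → Set T} {α β : ℕ → ℕ} {n : ℕ}
    (h : ∀ k ≤ n, α k = β k) : Wset V α n = Wset V β n := by
  unfold Wset
  exact Set.iInter₂_congr fun k hk => by rw [h k hk]

lemma isOpen_Wset {nk : ℕ → ℕ} {V : ℕ → ℕ → Set T}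
    (hVopen : ∀ k i, i ≤ nk k → IsOpen (V k i)) {α : ℕ → ℕ} (hα : Bnd nk α) (n : ℕ) :
    IsOpen (Wset V α n) := by
  have h : Wset V α n = ⋂ k ∈ Set.Iic n, V k (α k) := rfl
  rw [h]
  exact Set.Finite.isOpen_biInter (Set.finite_Iic n) (fun k _ => hVopen k (α k) (hα k))

lemma OB_mono {nk : ℕ → ℕ} {q x : ROm nk} {N M : ℕ} (hx : x ∈ OB nk q N)
    (hNM : N ≤ M) : OB nk x M ⊆ OB nk q N := by
  rintro r ⟨h1, h2⟩
  refine ⟨fun k hk => ?_, fun k hk => ?_⟩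
  · obtain ⟨a, b⟩ := h1 k (hk.trans hNM)
    obtain ⟨c, d⟩ := hx.1 k hk
    exact ⟨a.trans c, b.trans d⟩
  · by_cases hkM : M < k
    · exact h2 k hkM
    · push_neg at hkM
      obtain ⟨a, b⟩ := h1 k hkM
      rw [a, b]
      exact hx.2 k hk

lemma mem_OB_self {nk : ℕ → ℕ} (p : ROm nk) {N : ℕ}
    (h : ∀ k, N < k → p.1.1 k = p.1.2 k) : p ∈ OB nk p N :=
  ⟨fun k _ => ⟨rfl, rfl⟩, h⟩

lemma exists_tail_bound {nk : ℕ → ℕ} (p : ROm nk) (N₀ : ℕ) :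
    ∃ N, N₀ ≤ N ∧ ∀ k, N < k → p.1.1 k = p.1.2 k := by
  obtain ⟨M, hM⟩ := (p.2.2.2).bddAbove
  refine ⟨max N₀ M, le_max_left _ _, fun k hk => ?_⟩
  by_contra h
  have h1 : k ≤ M := hM h
  have h2 : M < k := lt_of_le_of_lt (le_max_right N₀ M) hk
  omega

lemma isBasis_BS (nk : ℕ → ℕ) : IsTopologicalBasis (BS nk) := by
  refine ⟨?_, ?_, rfl⟩
  · rintro s₁ ⟨q₁, N₁, hq₁, rfl⟩ s₂ ⟨q₂, N₂, hq₂, rfl⟩ x ⟨hx₁, hx₂⟩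
    have htail : ∀ k, max N₁ N₂ < k → x.1.1 k = x.1.2 k :=
      fun k hk => hx₁.2 k (lt_of_le_of_lt (le_max_left _ _) hk)
    exact ⟨OB nk x (max N₁ N₂), ⟨x, max N₁ N₂, htail, rfl⟩, mem_OB_self x htail,
      Set.subset_inter (OB_mono hx₁ (le_max_left _ _)) (OB_mono hx₂ (le_max_right _ _))⟩
  · ext x
    simp only [Set.mem_sUnion, Set.mem_univ, iff_true]
    obtain ⟨N, -, hN⟩ := exists_tail_bound x 0
    exact ⟨OB nk x N, ⟨x, N, hN, rfl⟩, mem_OB_self x hN⟩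

/-- The topological closure of `G_∞` in `T ∗ R(Ω)` equals
`{(α,t,β) : t ∈ ⋂_N closure (W_{α|N} ∩ W_{β|N})}`. -/
theorem closure_GinfSet
    (nk : ℕ → ℕ) (V : ℕ → ℕ → Set T)
    (hVopen : ∀ k i, i ≤ nk k → IsOpen (V k i))
    (hVcover : ∀ k (t : T), ∃ i ≤ nk k, t ∈ V k i) :
    closure (GinfSet nk V) =
      {x : TROm nk T | ∀ N, x.2 ∈ closure (Wset V x.1.1.1 N ∩ Wset V x.1.1.2 N)} := by
  apply subset_antisymm
  · apply closure_minimal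
    · intro x hx N
      exact subset_closure ⟨(hx N).1, (hx N).2⟩
    · rw [← isOpen_compl_iff, isOpen_iff_forall_mem_open]
      intro x hx
      simp only [Set.mem_compl_iff, Set.mem_setOf_eq, not_forall] at hx
      obtain ⟨N, hN⟩ := hx
      obtain ⟨M, hNM, hM⟩ := exists_tail_bound x.1 N
      refine ⟨OB nk x.1 M ×ˢ (closure (Wset V x.1.1.1 N ∩ Wset V x.1.1.2 N))ᶜ,
        ?_, ?_, ?_⟩
      · rintro ⟨r, s⟩ ⟨hr, hs⟩
        simp only [Set.mem_compl_iff, Set.mem_setOf_eq, not_forall]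
        refine ⟨N, ?_⟩
        have e1 : Wset V r.1.1 N = Wset V x.1.1.1 N :=
          Wset_congr (fun k hk => (hr.1 k (hk.trans hNM)).1)
        have e2 : Wset V r.1.2 N = Wset V x.1.1.2 N :=
          Wset_congr (fun k hk => (hr.1 k (hk.trans hNM)).2)
        rw [e1, e2]
        exact hs
      · exact IsOpen.prod ((isBasis_BS nk).isOpen ⟨x.1, M, hM, rfl⟩)
          (isOpen_compl_iff.mpr isClosed_closure)
      · exact ⟨mem_OB_self x.1 hM, hN⟩
  · intro x hx
    rw [mem_closure_iff]
    intro o ho hxo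
    obtain ⟨u, v, hu, hv, hxu, hxv, huv⟩ := isOpen_prod_iff.mp ho x.1 x.2 hxo
    obtain ⟨s, ⟨q, N, hq, rfl⟩, hxs, hsu⟩ :=
      (isBasis_BS nk).exists_subset_of_mem_open hxu hu
    have hW : (v ∩ (Wset V x.1.1.1 N ∩ Wset V x.1.1.2 N)).Nonempty :=
      mem_closure_iff.mp (hx N) v hv hxv
    obtain ⟨t₀, ht₀v, ht₀α, ht₀β⟩ := hW
    choose i hi hti using fun k => hVcover k t₀
    set α' : ℕ → ℕ := fun k => if k ≤ N then x.1.1.1 k else i k with hα'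
    set β' : ℕ → ℕ := fun k => if k ≤ N then x.1.1.2 k else i k with hβ'
    have hbα : Bnd nk α' := by
      intro k
      by_cases h : k ≤ N
      · simpa [hα', h] using x.1.2.1 k
      · simpa [hα', h] using hi k
    have hbβ : Bnd nk β' := by
      intro k
      by_cases h : k ≤ N
      · simpa [hβ', h] using x.1.2.2.1 k
      · simpa [hβ', h] using hi k
    have htail : TailEq α' β' := by
      apply (Set.finite_Iic N).subset
      intro k hk
      simp only [Set.mem_setOf_eq] at hk
      by_contra h
      simp only [Set.mem_Iic, not_le] at h
      have hkN : ¬ k ≤ N := by omega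
      simp [hα', hβ', hkN] at hk
    refine ⟨(⟨(α', β'), hbα, hbβ, htail⟩, t₀), huv ⟨hsu ?_, ht₀v⟩, ?_⟩
    · refine ⟨fun k hk => ?_, fun k hk => ?_⟩
      · obtain ⟨c, d⟩ := hxs.1 k hk
        exact ⟨by simp only [hα', if_pos hk]; exact c, by simp only [hβ', if_pos hk]; exact d⟩
      · have hkN : ¬ k ≤ N := by omega
        simp [hα', hβ', hkN]
    · intro M
      constructor
      · rw [mem_Wset]
        intro k hk
        by_cases h : k ≤ N
        · simpa [hα', h] using mem_Wset.mp ht₀α k h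
        · simpa [hα', h] using hti k
      · rw [mem_Wset]
        intro k hk
        by_cases h : k ≤ N
        · simpa [hβ', h] using mem_Wset.mp ht₀β k h
        · simpa [hβ', h] using hti k
end

section
/- The unit space of Ǧ_∞, namely {(α,t,α) ∈ Ǧ_∞}, is open in Ǧ_∞; i.e., Ǧ_∞ is r-discrete. -/
open TopologicalSpace

variable {T : Type*} [TopologicalSpace T]

/-- The unit space `{(α,t,α)}` of `Ǧ_∞` is open in `Ǧ_∞`; i.e. `Ǧ_∞` is
r-discrete. -/
theorem GckSet_unitSpace_isOpen
    (nk : ℕ → ℕ) (V : ℕ → ℕ → Set T)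
    (hVopen : ∀ k i, i ≤ nk k → IsOpen (V k i))
    (hVcover : ∀ k (t : T), ∃ i ≤ nk k, t ∈ V k i) :
    IsOpen {z : ↥(GckSet nk V) | z.1.1.1.1 = z.1.1.1.2} := by
  have hdiag : IsOpen {p : ROm nk | p.1.1 = p.1.2} := by
    have : {p : ROm nk | p.1.1 = p.1.2}
        = ⋃ p ∈ {p : ROm nk | p.1.1 = p.1.2}, OB nk p 0 := by
      ext q
      constructor
      · intro hq
        refine Set.mem_biUnion hq ?_
        exact ⟨fun k _ => ⟨rfl, rfl⟩, fun k _ => congrFun hq k⟩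
      · intro hq
        obtain ⟨p, hp, h1, h2⟩ := Set.mem_iUnion₂.1 hq
        funext k
        rcases Nat.eq_zero_or_pos k with hk | hk
        · subst hk
          rw [(h1 0 le_rfl).1, (h1 0 le_rfl).2, hp]
        · exact h2 k hk
    rw [this]
    refine isOpen_biUnion fun p hp => ?_
    exact TopologicalSpace.GenerateOpen.basic _
      ⟨p, 0, fun k _ => congrFun hp k, rfl⟩
  have : {z : ↥(GckSet nk V) | z.1.1.1.1 = z.1.1.1.2}
      = Subtype.val ⁻¹' ({p : ROm nk | p.1.1 = p.1.2} ×ˢ (Set.univ : Set T)) := by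
    ext z
    simp [Set.mem_prod]
  rw [this]
  exact (hdiag.prod isOpen_univ).preimage continuous_subtype_val
end

section
/- The projection π_N : Ǧ_∞ → Ǧ_N given by π_N(α,t,β) = (α|N, t, β|N) is surjective: for every (x,t,y) ∈ Ǧ_N there exists (α,t,β) ∈ Ǧ_∞ with α|N = x and β|N = y. -/
open TopologicalSpace

variable {T : Type*} [TopologicalSpace T]

lemma mem_closure_inter_open' {T : Type*} [TopologicalSpace T] {t : T} {A U : Set T}
    (hA : t ∈ closure A) (hU : IsOpen U) (htU : t ∈ U) : t ∈ closure (A ∩ U) := by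
  rw [mem_closure_iff] at hA ⊢
  intro o ho hto
  obtain ⟨s, hs⟩ := hA (o ∩ U) (ho.inter hU) ⟨hto, htU⟩
  exact ⟨s, hs.1.1, hs.2, hs.1.2⟩

lemma closure_all {T : Type*} [TopologicalSpace T]
    (nk : ℕ → ℕ) (V : ℕ → ℕ → Set T)
    (hVopen : ∀ k i, i ≤ nk k → IsOpen (V k i)) (N : ℕ) (x : ℕ → ℕ) (c : ℕ → ℕ)
    (hc : ∀ k, c k ≤ nk k) (t : T) (hct : ∀ k, t ∈ V k (c k)) (htx : t ∈ closure (Wset V x N)) (M : ℕ) :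
    t ∈ closure (Wset V (fun k => if k ≤ N then x k else c k) M) := by
  set α : ℕ → ℕ := fun k => if k ≤ N then x k else c k with hα
  set U : Set T := ⋂ k ∈ (Finset.range (M+1)).filter (fun k => N < k), V k (c k) with hU
  have hUopen : IsOpen U := isOpen_biInter_finset (fun k _ => hVopen k (c k) (hc k))
  have htU : t ∈ U := Set.mem_iInter₂.2 fun k _ => hct k
  have hsub : Wset V x N ∩ U ⊆ Wset V α M := by
    rintro s ⟨hs1, hs2⟩
    refine Set.mem_iInter₂.2 fun k hk => ?_
    by_cases h : k ≤ N
    · simpa [hα, h] using Set.mem_iInter₂.1 hs1 k h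
    · have : s ∈ V k (c k) := Set.mem_iInter₂.1 hs2 k
        (Finset.mem_filter.2 ⟨Finset.mem_range.2 (Nat.lt_succ_of_le hk), Nat.lt_of_not_le h⟩)
      simpa [hα, h] using this
  exact closure_mono hsub (mem_closure_inter_open' htx hUopen htU)

/-- Surjectivity of `π_N : Ǧ_∞ → Ǧ_N`: for every `(x,t,y) ∈ Ǧ_N` there exists
`(α,t,β) ∈ Ǧ_∞` with `α|N = x` and `β|N = y`. -/
theorem piN_surjective
    (nk : ℕ → ℕ) (V : ℕ → ℕ → Set T)
    (hVopen : ∀ k i, i ≤ nk k → IsOpen (V k i))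
    (hVcover : ∀ k (t : T), ∃ i ≤ nk k, t ∈ V k i)
    (N : ℕ) (x y : ℕ → ℕ)
    (hx : ∀ k ≤ N, x k ≤ nk k) (hy : ∀ k ≤ N, y k ≤ nk k)
    (t : T) (htx : t ∈ closure (Wset V x N)) (hty : t ∈ closure (Wset V y N)) :
    ∃ α β : ℕ → ℕ, InGck nk V α t β ∧ (∀ k ≤ N, α k = x k) ∧ (∀ k ≤ N, β k = y k) := by
  choose c hc hct using fun k => hVcover k t
  refine ⟨fun k => if k ≤ N then x k else c k, fun k => if k ≤ N then y k else c k,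
    ⟨?_, ?_, ?_, ?_, ?_⟩, fun k hk => if_pos hk, fun k hk => if_pos hk⟩
  · intro k; by_cases h : k ≤ N <;> simp [h, hx k, hc k]
  · intro k; by_cases h : k ≤ N <;> simp [h, hy k, hc k]
  · apply Set.Finite.subset (Set.finite_Iic N)
    intro k hk
    by_contra h
    exact hk (by simp [Set.mem_Iic] at h; simp [Nat.not_le_of_lt h, not_le.2 h])
  · exact closure_all nk V hVopen N x c hc t hct htx
  · exact closure_all nk V hVopen N y c hc t hct hty
end

section
/- For the ordered cover refinement of T = [0,1] with V^{(0)} = {[0,1], (1/2,1]} and V^{(k)} = {[0,1]} for k ≥ 1, the range map r : Ǧ_∞ → Ǧ_∞^{(0)} is not an open map; in particular Ǧ_∞ is not étale. Concretely, the image under r of the open neighborhood {(1̄, t, 2·1̄) ∈ Ǧ_∞ : t ∈ (1/4, 3/4)} of the point (1̄, 1/2, 2·1̄) equals {(1̄, t, 1̄) : t ∈ [1/2, 3/4)}, which is not open in Ǧ_∞^{(0)}. -/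
open TopologicalSpace

variable {T : Type*} [TopologicalSpace T]

/-- Index bounds for the example: `V⁽⁰⁾` has two sets (indices `0,1`), and
`V⁽ᵏ⁾` for `k ≥ 1` has a single set (index `0`). -/
def nkEx : ℕ → ℕ := fun k => if k = 0 then 1 else 0

/-- The example covers of `T = [0,1]`: `V⁽⁰⁾₀ = [0,1]`, `V⁽⁰⁾₁ = (1/2,1]`, and
`V⁽ᵏ⁾₀ = [0,1]` for `k ≥ 1`. -/
def VEx : ℕ → ℕ → Set unitInterval := fun k i =>
  if k = 0 ∧ i = 1 then {t : unitInterval | (1 : ℝ) / 2 < (t : ℝ)} else Set.univ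

/-- The constant sequence `1̄` (here indexed by `0`), picking `[0,1]` at every stage. -/
def aEx : ℕ → ℕ := fun _ => 0

/-- The sequence `2·1̄` (here `1` followed by `0`s), picking `(1/2,1]` then `[0,1]`s. -/
def bEx : ℕ → ℕ := fun k => if k = 0 then 1 else 0

/-- The range map `r(α,t,β) = (α,t,α)` on `T ∗ R(Ω)`. -/
def rEx (x : TROm nkEx unitInterval) : TROm nkEx unitInterval :=
  (⟨(x.1.1.1, x.1.1.1), x.1.2.1, x.1.2.1, by simp [TailEq]⟩, x.2)

/-- The open neighborhood `Ž_{1,2,(1/4,3/4),0}` of `(1̄, 1/2, 2·1̄)` inside `Ǧ_∞`. -/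
def UEx : Set (TROm nkEx unitInterval) :=
  {x | x.1.1.1 = aEx ∧ x.1.1.2 = bEx ∧
    (1 : ℝ) / 4 < (x.2 : ℝ) ∧ (x.2 : ℝ) < 3 / 4}

/-- The set `{(1̄, t, 1̄) : 1/2 ≤ t < 3/4}`. -/
def SEx : Set (TROm nkEx unitInterval) :=
  {x | x.1.1.1 = aEx ∧ x.1.1.2 = aEx ∧
    (1 : ℝ) / 2 ≤ (x.2 : ℝ) ∧ (x.2 : ℝ) < 3 / 4}

/-- The unit space of `Ǧ_∞` in this example. -/
def unitEx : Set (TROm nkEx unitInterval) :=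
  {x | x ∈ GckSet nkEx VEx ∧ x.1.1.1 = x.1.1.2}

lemma WsetA (N : ℕ) : Wset VEx aEx N = Set.univ := by
  ext t; simp [Wset, VEx, aEx]

lemma WsetB (N : ℕ) : Wset VEx bEx N = {t : unitInterval | (1:ℝ)/2 < (t:ℝ)} := by
  ext t
  simp only [Wset, Set.mem_iInter, Set.mem_setOf_eq, VEx, bEx]
  constructor
  · intro h
    have := h 0 (Nat.zero_le N)
    simpa using this
  · intro h k _
    by_cases hk : k = 0 <;> simp [hk] <;> linarith

lemma half_mem_closure : ∀ t : unitInterval, (1:ℝ)/2 ≤ (t:ℝ) →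
    t ∈ closure {s : unitInterval | (1:ℝ)/2 < (s:ℝ)} := by
  intro t ht
  rcases lt_or_eq_of_le ht with h | h
  · exact subset_closure h
  · rw [Metric.mem_closure_iff]
    intro ε hε
    refine ⟨⟨1/2 + min (ε/2) (1/4), by constructor <;> simp <;> [positivity; nlinarith [min_le_right (ε/2) (1/4)]]⟩, ?_, ?_⟩
    · simp only [Set.mem_setOf_eq]
      have : (0:ℝ) < min (ε/2) (1/4) := lt_min (by positivity) (by norm_num)
      push_cast; linarith
    · rw [Subtype.dist_eq, ← h]
      simp only [Real.dist_eq]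
      have h1 : (0:ℝ) < min (ε/2) (1/4) := lt_min (by positivity) (by norm_num)
      have h2 : min (ε/2) (1/4) ≤ ε/2 := min_le_left _ _
      rw [abs_sub_comm, abs_of_nonneg (by linarith)]
      linarith

lemma closure_le (t : unitInterval) (ht : t ∈ closure {s : unitInterval | (1:ℝ)/2 < (s:ℝ)}) :
    (1:ℝ)/2 ≤ (t:ℝ) := by
  have h2 := closure_minimal (s := {s : unitInterval | (1:ℝ)/2 < (s:ℝ)})
    (t := {s : unitInterval | (1:ℝ)/2 ≤ (s:ℝ)})
    (fun s hs => le_of_lt (a := (1:ℝ)/2) hs)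
    (IsClosed.preimage continuous_subtype_val isClosed_Ici) ht
  exact h2

lemma bndA : Bnd nkEx aEx := fun k => Nat.zero_le _

/-- The point `(1̄,1̄)` of `R(Ω)`. -/
def pEx : ROm nkEx := ⟨(aEx, aEx), bndA, bndA, by simp [TailEq]⟩

lemma mem_unitEx (t : unitInterval) : ((pEx, t) : TROm nkEx unitInterval) ∈ unitEx := by
  refine ⟨⟨fun N => ?_, fun N => ?_⟩, rfl⟩ <;>
    · show t ∈ closure (Wset VEx aEx N)
      rw [WsetA, closure_univ]; trivial

/-- For the cover of `T = [0,1]` by `V⁽⁰⁾ = {[0,1], (1/2,1]}` and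
`V⁽ᵏ⁾ = {[0,1]}` for `k ≥ 1`, the image under the range map of the open
neighborhood `{(1̄,t,2·1̄) ∈ Ǧ_∞ : 1/4 < t < 3/4}` equals
`{(1̄,t,1̄) : 1/2 ≤ t < 3/4}`, which is not open in the unit space `Ǧ_∞⁽⁰⁾`.
In particular the range map of `Ǧ_∞` is not open, so `Ǧ_∞` is not étale. -/
theorem Gck_not_etale_example :
    rEx '' (UEx ∩ GckSet nkEx VEx) = SEx ∧
    ¬ ∃ O : Set (TROm nkEx unitInterval), IsOpen O ∧ O ∩ unitEx = SEx := by
  constructor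
  · ext y
    constructor
    · rintro ⟨x, ⟨⟨ha, hb, h14, h34⟩, hG1, hG2⟩, rfl⟩
      refine ⟨ha, ha, ?_, h34⟩
      have h0 := hG2 0
      rw [hb, WsetB] at h0
      exact closure_le _ h0
    · rintro ⟨ha, hb, h12, h34⟩
      have hbndB : Bnd nkEx bEx := by
        intro k; by_cases h : k = 0 <;> simp [bEx, nkEx, h]
      have htail : TailEq aEx bEx := by
        apply Set.Finite.subset (Set.finite_singleton 0)
        intro k hk
        simp only [Set.mem_setOf_eq, aEx, bEx] at hk
        by_cases h : k = 0
        · simp [h]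
        · simp [h] at hk
      refine ⟨(⟨(aEx, bEx), bndA, hbndB, htail⟩, y.2),
        ⟨⟨rfl, rfl, by linarith, h34⟩, fun N => ?_, fun N => ?_⟩, ?_⟩
      · show y.2 ∈ closure (Wset VEx aEx N)
        rw [WsetA, closure_univ]; trivial
      · show y.2 ∈ closure (Wset VEx bEx N)
        rw [WsetB]
        exact half_mem_closure _ h12
      · refine Prod.ext (Subtype.ext ?_) rfl
        exact Prod.ext ha.symm hb.symm
  · rintro ⟨O, hO, hS⟩
    set x0 : TROm nkEx unitInterval := (pEx, ⟨1/2, by norm_num⟩) with hx0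
    have hx0S : x0 ∈ SEx := ⟨rfl, rfl, by norm_num, by norm_num⟩
    have hx0O : x0 ∈ O := by
      rw [← hS] at hx0S; exact hx0S.1
    have hcont : Continuous (fun t : unitInterval => ((pEx, t) : TROm nkEx unitInterval)) :=
      continuous_const.prodMk continuous_id
    have hopen : IsOpen ((fun t : unitInterval => ((pEx, t) : TROm nkEx unitInterval)) ⁻¹' O) :=
      hO.preimage hcont
    rw [Metric.isOpen_iff] at hopen
    obtain ⟨ε, hε, hball⟩ := hopen ⟨1/2, by norm_num⟩ hx0O
    set s : ℝ := max 0 (1/2 - ε/2) with hsdef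
    have hs0 : 0 ≤ s := le_max_left _ _
    have hs1 : s ≤ 1 := by
      apply max_le (by norm_num); linarith
    have hslt : s < 1/2 := by
      apply max_lt (by norm_num); linarith
    have hsge : 1/2 - ε/2 ≤ s := le_max_right _ _
    have hmem : (⟨s, hs0, hs1⟩ : unitInterval) ∈ Metric.ball (⟨1/2, by norm_num⟩ : unitInterval) ε := by
      rw [Metric.mem_ball, Subtype.dist_eq, Real.dist_eq, abs_of_nonpos (by simpa using hslt.le)]
      simp only
      linarith
    have hOmem := hball hmem
    have hSmem : ((pEx, ⟨s, hs0, hs1⟩) : TROm nkEx unitInterval) ∈ SEx := by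
      rw [← hS]
      exact ⟨hOmem, mem_unitEx _⟩
    have := hSmem.2.2.1
    simp only at this
    linarith
end
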